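/- arXiv:2508.19052 — 2 statements merged into one kernel-verified Lean document; each statement's English description precedes it below -/
import Mathlib

section
/- (Final out-of-distribution estimate for the collapsed sparse model.) Let ε > 0, Δt > 0 and α = 1, and let U, u1, u2, u3, A1, A2 ∈ ℝ satisfy |U·u1 − 1| ≤ ε, Δt·|U·u3 − 1| ≤ ε, Δt·|U·u2·A1 − 1| ≤ ε and Δt·|U·u2·A2 − 1| ≤ 2ε. Let P be a node with V_P > 0, a finite neighbour set N(P) with face areas A_j > 0 and centroid distances δ_j > 0, such that the Fourier condition Δt·Σ_{j∈N(P)} A_j/δ_j ≤ V_P holds and |T_P| ≤ 1, |T_j| ≤ 1 for all j ∈ N(P), |S_P| ≤ 1. Set β_j = (A_j/δ_j)·(T_j − T_P) and define the model output M = U·u1·T_P + U·u2·(Δt/V_P)·( Σ_{j: β_j ≥ 0} A1·β_j + Σ_{j: β_j < 0} A2·β_j ) + U·u3·Δt·S_P. Then |M − F_P| ≤ 2ε·(1 + 2/Δt), where F_P is the first-order finite-volume update. -/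
/-!
Subtracting `F_P` from `M` leaves three error terms, one per learned coefficient:
`(U u1 - 1) T_P`, `(Δt / V_P)` times the sign-split flux sum with weights `U u2 A1 - 1` and
`U u2 A2 - 1`, and `(U u3 - 1) Δt S_P`. The first and last are at most `ε` since the data are
normalized. Each flux `β_j` is at most `2 A_j / δ_j` in absolute value, so the Fourier condition
bounds `Σ |β_j|` by `2 V_P / Δt`; with both weights at most `2ε / Δt` the middle term is at most
`4ε / Δt`.
-/

open Finset

/-- First-order finite-volume update at a node `P` (with `α = 1`):
`F_P = T_P + (Δt/V_P)·Σ_{j∈N(P)} (A_j/δ_j)·(T_j − T_P) + Δt·S_P`. -/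
noncomputable def fvUpdate {ι : Type*} (Δt V_P T_P S_P : ℝ)
    (N : Finset ι) (A δ T : ι → ℝ) : ℝ :=
  T_P + (Δt / V_P) * ∑ j ∈ N, (A j / δ j) * (T j - T_P) + Δt * S_P

section SignSplit

variable {ι α : Type*} (s : Finset ι) (f : ι → α)

theorem sum_filter_nonneg_add_sum_filter_neg {M : Type*} [AddCommMonoid M] [LinearOrder α]
    [Zero α] (g : ι → M) :
    ∑ i ∈ s with 0 ≤ f i, g i + ∑ i ∈ s with f i < 0, g i = ∑ i ∈ s, g i := by
  simpa only [not_le] using sum_filter_add_sum_filter_not s (fun i => 0 ≤ f i) g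

variable [Ring α] [LinearOrder α] [IsOrderedRing α]

theorem abs_mul_sum_filter_nonneg_add_mul_sum_filter_neg_le {a b K : α}
    (ha : |a| ≤ K) (hb : |b| ≤ K) :
    |a * ∑ i ∈ s with 0 ≤ f i, f i + b * ∑ i ∈ s with f i < 0, f i| ≤
      K * ∑ i ∈ s, |f i| := by
  calc |a * ∑ i ∈ s with 0 ≤ f i, f i + b * ∑ i ∈ s with f i < 0, f i|
      ≤ |a| * |∑ i ∈ s with 0 ≤ f i, f i| + |b| * |∑ i ∈ s with f i < 0, f i| := by
        rw [← abs_mul, ← abs_mul]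
        exact abs_add_le _ _
    _ ≤ K * ∑ i ∈ s with 0 ≤ f i, |f i| + K * ∑ i ∈ s with f i < 0, |f i| := by
        have hK : 0 ≤ K := (abs_nonneg a).trans ha
        gcongr
        · exact abs_sum_le_sum_abs _ _
        · exact abs_sum_le_sum_abs _ _
    _ = K * ∑ i ∈ s, |f i| := by
        rw [← mul_add, sum_filter_nonneg_add_sum_filter_neg]

theorem sum_abs_mul_sub_le_two_mul_sum (c T : ι → α) (t : α)
    (hc : ∀ i ∈ s, 0 ≤ c i) (hT : ∀ i ∈ s, |T i| ≤ 1) (ht : |t| ≤ 1) :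
    ∑ i ∈ s, |c i * (T i - t)| ≤ 2 * ∑ i ∈ s, c i := by
  rw [mul_sum]
  refine sum_le_sum fun i hi => ?_
  have hdiff : |T i - t| ≤ 2 :=
    (abs_sub _ _).trans (by rw [← one_add_one_eq_two]; exact add_le_add (hT i hi) ht)
  rw [abs_mul, abs_of_nonneg (hc i hi), two_mul, ← mul_two]
  exact mul_le_mul_of_nonneg_left hdiff (hc i hi)

end SignSplit

theorem collapsed_model_ood_estimate_general {ι : Type*}
    (ε Δt U u1 u2 u3 A1 A2 : ℝ) (hΔt : 0 < Δt)
    (hu1 : |U * u1 - 1| ≤ ε)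
    (hu3 : Δt * |U * u3 - 1| ≤ ε)
    (hA1 : Δt * |U * u2 * A1 - 1| ≤ ε)
    (hA2 : Δt * |U * u2 * A2 - 1| ≤ 2 * ε)
    (V_P T_P S_P : ℝ) (hV : 0 < V_P)
    (N : Finset ι) (A δ T : ι → ℝ)
    (hA : ∀ j ∈ N, 0 < A j) (hδ : ∀ j ∈ N, 0 < δ j)
    (hFourier : Δt * ∑ j ∈ N, A j / δ j ≤ V_P)
    (hTP : |T_P| ≤ 1) (hT : ∀ j ∈ N, |T j| ≤ 1) (hSP : |S_P| ≤ 1) :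
    |U * u1 * T_P +
        U * u2 * (Δt / V_P) *
          ((∑ j ∈ N.filter fun j => 0 ≤ (A j / δ j) * (T j - T_P),
              A1 * ((A j / δ j) * (T j - T_P))) +
            ∑ j ∈ N.filter fun j => (A j / δ j) * (T j - T_P) < 0,
              A2 * ((A j / δ j) * (T j - T_P))) +
        U * u3 * (Δt * S_P) -
      fvUpdate Δt V_P T_P S_P N A δ T| ≤ 2 * ε * (1 + 2 / Δt) := by
  set β : ι → ℝ := fun j => A j / δ j * (T j - T_P)
  have hflux : ∑ j ∈ N, |β j| ≤ 2 * (V_P / Δt) :=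
    (sum_abs_mul_sub_le_two_mul_sum N _ T T_P (fun j hj => (div_pos (hA j hj) (hδ j hj)).le)
      hT hTP).trans (by gcongr; rwa [le_div_iff₀ hΔt, mul_comm])
  have hε0 : 0 ≤ ε := (abs_nonneg _).trans hu1
  have hweight {a : ℝ} (h : Δt * |a| ≤ 2 * ε) : |a| ≤ 2 * ε / Δt := by
    rwa [le_div_iff₀ hΔt, mul_comm]
  have hmid := abs_mul_sum_filter_nonneg_add_mul_sum_filter_neg_le N β
    (hweight (hA1.trans (by linarith))) (hweight hA2)
  calc _ = |(U * u1 - 1) * T_P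
          + Δt / V_P * ((U * u2 * A1 - 1) * ∑ j ∈ N with 0 ≤ β j, β j
            + (U * u2 * A2 - 1) * ∑ j ∈ N with β j < 0, β j)
          + (U * u3 - 1) * (Δt * S_P)| := by
        rw [fvUpdate, ← mul_sum, ← mul_sum, ← sum_filter_nonneg_add_sum_filter_neg N β β]
        simp only [β]
        ring_nf
    _ ≤ ε + Δt / V_P * (2 * ε / Δt * (2 * (V_P / Δt))) + ε := by
        refine (abs_add_three _ _ _).trans (add_le_add_three ?_ ?_ ?_)
        · rw [abs_mul]
          exact (mul_le_of_le_one_right (abs_nonneg _) hTP).trans hu1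
        · rw [abs_mul, abs_of_pos (div_pos hΔt hV)]
          gcongr
          exact hmid.trans (by gcongr)
        · rw [abs_mul, abs_mul, abs_of_pos hΔt, mul_left_comm, ← mul_assoc]
          exact (mul_le_of_le_one_right (by positivity) hSP).trans hu3
    _ = 2 * ε * (1 + 2 / Δt) := by
        field_simp
        ring

/-- **Final out-of-distribution estimate for the collapsed sparse
model.** If `|U·u1 − 1| ≤ ε`, `Δt·|U·u3 − 1| ≤ ε`, `Δt·|U·u2·A1 − 1| ≤ ε`,
`Δt·|U·u2·A2 − 1| ≤ 2ε`, then at any node satisfying the Fourier condition with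
normalized data, the collapsed model
`M = U·u1·T_P + U·u2·(Δt/V_P)·(Σ_{β_j ≥ 0} A1·β_j + Σ_{β_j < 0} A2·β_j) + U·u3·Δt·S_P`
(where `β_j = (A_j/δ_j)·(T_j − T_P)`) satisfies `|M − F_P| ≤ 2ε·(1 + 2/Δt)`. -/
theorem collapsed_model_ood_estimate {ι : Type*} [DecidableEq ι]
    (ε Δt U u1 u2 u3 A1 A2 : ℝ) (hε : 0 < ε) (hΔt : 0 < Δt)
    (hu1 : |U * u1 - 1| ≤ ε)
    (hu3 : Δt * |U * u3 - 1| ≤ ε)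
    (hA1 : Δt * |U * u2 * A1 - 1| ≤ ε)
    (hA2 : Δt * |U * u2 * A2 - 1| ≤ 2 * ε)
    (V_P T_P S_P : ℝ) (hV : 0 < V_P)
    (N : Finset ι) (A δ T : ι → ℝ)
    (hA : ∀ j ∈ N, 0 < A j) (hδ : ∀ j ∈ N, 0 < δ j)
    (hFourier : Δt * ∑ j ∈ N, A j / δ j ≤ V_P)
    (hTP : |T_P| ≤ 1) (hT : ∀ j ∈ N, |T j| ≤ 1) (hSP : |S_P| ≤ 1) :
    |U * u1 * T_P +
        U * u2 * (Δt / V_P) *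
          ((∑ j ∈ N.filter fun j => 0 ≤ (A j / δ j) * (T j - T_P),
              A1 * ((A j / δ j) * (T j - T_P))) +
            ∑ j ∈ N.filter fun j => (A j / δ j) * (T j - T_P) < 0,
              A2 * ((A j / δ j) * (T j - T_P))) +
        U * u3 * (Δt * S_P) -
      fvUpdate Δt V_P T_P S_P N A δ T| ≤ 2 * ε * (1 + 2 / Δt) :=
  collapsed_model_ood_estimate_general ε Δt U u1 u2 u3 A1 A2 hΔt hu1 hu3 hA1 hA2 V_P T_P S_P hV N A
    δ T hA hδ hFourier hTP hT hSP
end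

section
/- (Scalar weight identification for the collapsed sparse model.) Let ε > 0, Δt > 0, α = 1, and U, u1, u2, u3, A1, A2 ∈ ℝ. On a training graph G(T1,T2,S1,S2) (where (1/V)·(A/δ) = 1, so β = T_2 − T_1 at node 1), define the collapsed model output at node 1 as M = U·u1·T_1 + U·u2·Δt·(A1·(T_2 − T_1) if T_2 ≥ T_1, else A2·(T_2 − T_1)) + U·u3·Δt·S_1, and let F be the first-order finite-volume update at node 1. If |M − F| ≤ ε at node 1 of each of the training graphs G(1,1,0,0), G(0,0,1,1), G(0,1,0,0) and G(1,0,0,0), then |U·u1 − 1| ≤ ε, Δt·|U·u3 − 1| ≤ ε, Δt·|U·u2·A1 − 1| ≤ ε and Δt·|U·u2·A2 − 1| ≤ 2ε. -/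
/-- First-order finite-volume update at node 1 of the two-cell training graph
`G(T1,T2,S1,S2)` with `α = 1`: since `(1/V)·(A/δ) = 1` on this geometry,
`F = T1 + Δt·(T2 − T1) + Δt·S1`. -/
noncomputable def trainFV (Δt T1 T2 S1 : ℝ) : ℝ :=
  T1 + Δt * (T2 - T1) + Δt * S1

/-- Collapsed sparse model output at node 1 of the two-cell training graph
`G(T1,T2,S1,S2)` (with `α = 1`, so `β = T2 − T1`):
`M = U·u1·T1 + U·u2·Δt·(A1·(T2 − T1)` if `T2 ≥ T1`, else `A2·(T2 − T1)) + U·u3·Δt·S1`. -/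
noncomputable def collapsedModel (U u1 u2 u3 A1 A2 Δt T1 T2 S1 : ℝ) : ℝ :=
  U * u1 * T1 +
    U * u2 * Δt * (if T1 ≤ T2 then A1 * (T2 - T1) else A2 * (T2 - T1)) +
    U * u3 * (Δt * S1)

/-- **Scalar weight identification for the collapsed sparse model.**
If the collapsed model is `ε`-close to the first-order finite-volume update at node 1
of each of the training graphs `G(1,1,0,0)`, `G(0,0,1,1)`, `G(0,1,0,0)` and
`G(1,0,0,0)`, then `|U·u1 − 1| ≤ ε`, `Δt·|U·u3 − 1| ≤ ε`, `Δt·|U·u2·A1 − 1| ≤ ε` and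
`Δt·|U·u2·A2 − 1| ≤ 2ε`. -/
theorem collapsed_model_weights_identified (ε Δt U u1 u2 u3 A1 A2 : ℝ)
    (hε : 0 < ε) (hΔt : 0 < Δt)
    (h1100 : |collapsedModel U u1 u2 u3 A1 A2 Δt 1 1 0 - trainFV Δt 1 1 0| ≤ ε)
    (h0011 : |collapsedModel U u1 u2 u3 A1 A2 Δt 0 0 1 - trainFV Δt 0 0 1| ≤ ε)
    (h0100 : |collapsedModel U u1 u2 u3 A1 A2 Δt 0 1 0 - trainFV Δt 0 1 0| ≤ ε)
    (h1000 : |collapsedModel U u1 u2 u3 A1 A2 Δt 1 0 0 - trainFV Δt 1 0 0| ≤ ε) :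
    |U * u1 - 1| ≤ ε ∧
      Δt * |U * u3 - 1| ≤ ε ∧
      Δt * |U * u2 * A1 - 1| ≤ ε ∧
      Δt * |U * u2 * A2 - 1| ≤ 2 * ε := by
  simp only [collapsedModel, trainFV] at h1100 h0011 h0100 h1000
  norm_num at h1100 h0011 h0100 h1000
  have habs : ∀ x : ℝ, Δt * |x| = |Δt * x| := fun x => by
    rw [abs_mul, abs_of_pos hΔt]
  refine ⟨?_, ?_, ?_, ?_⟩
  · have := h1100; rw [abs_le] at this ⊢; constructor <;> nlinarith
  · rw [habs]; have := h0011; rw [abs_le] at this ⊢; constructor <;> nlinarith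
  · rw [habs]; have := h0100; rw [abs_le] at this ⊢; constructor <;> nlinarith
  · rw [habs]
    have := h1000; rw [abs_le] at this ⊢
    have h1 := abs_le.mp h1100
    constructor <;> nlinarith
end
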